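/- arXiv:1205.1163 — 7 statements merged into one kernel-verified Lean document; each statement's English description precedes it below -/
import Mathlib

section
/- Let α, δ be real numbers with 0 < δ ≤ 4, and define P(u,v,w) = α + u² + v² + w² + uvw − δ(u+v+w). Then P(u,v,w) ≥ 0 for all u ≥ 0, v ≥ 0, w ≥ 0 if and only if (δ+1)(3 − 2√(δ+1)) ≥ 1 − α and δ² ≤ 2α. -/
/-!
Put `t = √(δ+1) - 1`, so that `δ = t² + 2t`, `0 ≤ t` and, since `δ ≤ 4`, `t² ≤ 2`. Recentred at
`(t, t, t)`, the polynomial becomes `P(t+x, t+y, t+z) = α - t²(2t+3) + Q(x,y,z)` with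
`Q = x² + y² + z² + t(xy + yz + zx) + xyz`, which has no linear part. On `x, y, z ≥ -t` the form `Q`
is nonnegative: if all coordinates are positive this is clear, and if say `z ≤ 0` then `4(2+t+z) Q`
is a sum of squares with nonnegative weights. Hence the minimum of `P` on the octant is
`α - t²(2t+3) = α - 1 + (δ+1)(3 - 2√(δ+1))`, attained at `(t, t, t)`; the condition `δ² ≤ 2α` comes
from the point `(δ/2, δ/2, 0)`.
-/

def P (α δ u v w : ℝ) : ℝ := α + u^2 + v^2 + w^2 + u*v*w - δ*(u+v+w)

def Q (t x y z : ℝ) : ℝ := x^2 + y^2 + z^2 + t*(x*y + y*z + z*x) + x*y*z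

lemma P_shift (α t x y z : ℝ) :
    P α (t^2 + 2*t) (t+x) (t+y) (t+z) = α - t^2*(2*t + 3) + Q t x y z := by
  unfold P Q; ring

lemma Q_swap (t x y z : ℝ) : Q t x y z = Q t x z y := by unfold Q; ring

lemma Q_rotate (t x y z : ℝ) : Q t x y z = Q t y z x := by unfold Q; ring

lemma Q_nonneg_of_nonpos {t z : ℝ} (x y : ℝ) (ht : t^2 ≤ 2) (hz : -t ≤ z) (hz0 : z ≤ 0) :
    0 ≤ Q t x y z := by
  have hc : 0 < 2 + t + z := by nlinarith
  have hsos : 4*(2 + t + z) * Q t x y z = ((2 + t + z)*(x + y) + 2*t*z)^2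
      + (2 + t + z)*(2 - t - z)*(x - y)^2 + 4*(2 + t + z - t^2)*z^2 := by
    unfold Q; ring
  have h2 : 0 ≤ 2 - t - z := by nlinarith
  have h3 : 0 ≤ 2 + t + z - t^2 := by linarith
  have : 0 ≤ 4*(2 + t + z) * Q t x y z := by rw [hsos]; positivity
  nlinarith

lemma Q_nonneg {t x y z : ℝ} (ht0 : 0 ≤ t) (ht2 : t^2 ≤ 2)
    (hx : -t ≤ x) (hy : -t ≤ y) (hz : -t ≤ z) : 0 ≤ Q t x y z := by
  rcases le_or_gt z 0 with hz0 | hz0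
  · exact Q_nonneg_of_nonpos x y ht2 hz hz0
  rcases le_or_gt y 0 with hy0 | hy0
  · rw [Q_swap]; exact Q_nonneg_of_nonpos x z ht2 hy hy0
  rcases le_or_gt x 0 with hx0 | hx0
  · rw [Q_rotate]; exact Q_nonneg_of_nonpos y z ht2 hx hx0
  · unfold Q; positivity

lemma P_nonneg_iff (α : ℝ) {t : ℝ} (ht0 : 0 ≤ t) (ht2 : t^2 ≤ 2) :
    (∀ u v w : ℝ, 0 ≤ u → 0 ≤ v → 0 ≤ w → 0 ≤ P α (t^2 + 2*t) u v w) ↔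
      t^2*(2*t + 3) ≤ α := by
  constructor
  · intro h
    have := h (t + 0) (t + 0) (t + 0) (by simpa) (by simpa) (by simpa)
    rw [P_shift] at this
    simpa [Q] using this
  · intro h u v w hu hv hw
    rw [← add_sub_cancel t u, ← add_sub_cancel t v, ← add_sub_cancel t w, P_shift]
    have := Q_nonneg ht0 ht2 (x := u - t) (y := v - t) (z := w - t)
      (by linarith) (by linarith) (by linarith)
    linarith

lemma sq_le_two_mul_of_P_nonneg {α δ : ℝ} (hδ : 0 ≤ δ)
    (h : ∀ u v w : ℝ, 0 ≤ u → 0 ≤ v → 0 ≤ w → 0 ≤ P α δ u v w) : δ^2 ≤ 2*α := by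
  have := h (δ/2) (δ/2) 0 (by linarith) (by linarith) le_rfl
  unfold P at this
  nlinarith

lemma exists_sqrt_add_one_eq {δ : ℝ} (hδ0 : 0 ≤ δ) (hδ4 : δ ≤ 4) :
    ∃ t : ℝ, 0 ≤ t ∧ t^2 ≤ 2 ∧ δ = t^2 + 2*t ∧ Real.sqrt (δ + 1) = t + 1 := by
  have hs := Real.sq_sqrt (show 0 ≤ δ + 1 by linarith)
  have hs1 : 1 ≤ Real.sqrt (δ + 1) := Real.one_le_sqrt.2 (by linarith)
  refine ⟨Real.sqrt (δ + 1) - 1, by linarith, ?_, by linear_combination -hs, by ring⟩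
  nlinarith

theorem stmt0 (α δ : ℝ) (hδ0 : 0 < δ) (hδ4 : δ ≤ 4) :
    (∀ u v w : ℝ, 0 ≤ u → 0 ≤ v → 0 ≤ w →
      0 ≤ α + u^2 + v^2 + w^2 + u*v*w - δ*(u+v+w)) ↔
    ((δ+1)*(3 - 2*Real.sqrt (δ+1)) ≥ 1 - α ∧ δ^2 ≤ 2*α) := by
  obtain ⟨t, ht0, ht2, rfl, hsqrt⟩ := exists_sqrt_add_one_eq hδ0.le hδ4
  rw [hsqrt]
  constructor
  · intro h
    have hα := (P_nonneg_iff α ht0 ht2).1 h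
    exact ⟨by linarith, sq_le_two_mul_of_P_nonneg hδ0.le h⟩
  · rintro ⟨h, -⟩
    exact (P_nonneg_iff α ht0 ht2).2 (by linarith)
end

section
/- Let δ be a real number with 0 < δ ≤ 4. Then the function P(u,v,w) = α + u² + v² + w² + uvw − δ(u+v+w) has exactly one critical point in the open region u > 0, v > 0, w > 0, namely u = v = w = √(δ+1) − 1, and at this point P equals (δ+1)(3 − 2√(δ+1)) + α − 1. -/
/-!
Subtracting two of the critical-point equations gives `(u - v) * (2 - w) = 0`, and `w = 2` is
impossible for positive `u, v` since the third equation would force `δ = 4 + u * v > 4`.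
Hence a positive critical point lies on the diagonal, where the equations reduce to
`(u + 1) ^ 2 = δ + 1`.
-/

open Real

lemma sub_mul_two_sub_eq_zero {δ u v w : ℝ} (hu : 2 * u + v * w = δ) (hv : 2 * v + u * w = δ) :
    (u - v) * (2 - w) = 0 := by
  linear_combination hu - hv

lemma eq_of_critical_of_le_four {δ u v w : ℝ} (hδ : δ ≤ 4) (hu0 : 0 < u) (hv0 : 0 < v)
    (hu : 2 * u + v * w = δ) (hv : 2 * v + u * w = δ) (hw : 2 * w + u * v = δ) : u = v := by
  rcases mul_eq_zero.mp (sub_mul_two_sub_eq_zero hu hv) with h | h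
  · linarith
  · linarith [mul_pos hu0 hv0]

lemma two_mul_add_mul_self_eq_iff {δ u : ℝ} (hu : 0 < u) :
    2 * u + u * u = δ ↔ u = √(δ + 1) - 1 := by
  constructor
  · rintro rfl
    rw [show 2 * u + u * u + 1 = (u + 1) ^ 2 by ring, sqrt_sq (by linarith)]
    ring
  · intro h
    have hδ : 0 ≤ δ + 1 := (sqrt_pos.mp (by linarith)).le
    rw [h]
    linear_combination sq_sqrt hδ

theorem stmt1 (α δ : ℝ) (hδ0 : 0 < δ) (hδ4 : δ ≤ 4) :
    (∀ u v w : ℝ, 0 < u → 0 < v → 0 < w →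
      ((2*u + v*w = δ ∧ 2*v + u*w = δ ∧ 2*w + u*v = δ) ↔
        (u = Real.sqrt (δ+1) - 1 ∧ v = Real.sqrt (δ+1) - 1 ∧
         w = Real.sqrt (δ+1) - 1))) ∧
    (let s := Real.sqrt (δ+1) - 1;
      α + s^2 + s^2 + s^2 + s*s*s - δ*(s+s+s)
        = (δ+1)*(3 - 2*Real.sqrt (δ+1)) + α - 1) := by
  refine ⟨fun u v w hu hv hw => ⟨?_, ?_⟩, ?_⟩
  · rintro ⟨h1, h2, h3⟩
    have huv : u = v := eq_of_critical_of_le_four hδ4 hu hv h1 h2 h3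
    have hvw : v = w := eq_of_critical_of_le_four hδ4 hv hw
      (by rwa [mul_comm w u]) (by rwa [mul_comm v u]) h1
    subst huv hvw
    exact ⟨(two_mul_add_mul_self_eq_iff hu).mp h1, (two_mul_add_mul_self_eq_iff hu).mp h1,
      (two_mul_add_mul_self_eq_iff hu).mp h1⟩
  · rintro ⟨rfl, rfl, rfl⟩
    have h := (two_mul_add_mul_self_eq_iff hu).mpr rfl
    exact ⟨h, h, h⟩
  · dsimp only
    linear_combination √(δ + 1) * sq_sqrt (show 0 ≤ δ + 1 by linarith)
end

section
/- Let γ ∈ [0,1] and let κ be a real number satisfying (2 − √2)/(γ+1) ≤ κ ≤ min{2, (2 + √2)/(γ+1)}. Then for all y₁ ≥ 0, y₂ ≥ 0: 1 + 2(y₁² + y₂² + y₁²y₂²) − κ(y₁² + y₂² + 2γ y₁y₂) ≥ 0. -/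
/-! With `q = y₁ y₂` the polynomial is the sum of squares
`(2 - κ)(y₁ - y₂)² + (√2 q - 1)² + 2q(2 + √2 - κ(γ + 1))`,
each term being nonnegative under `κ ≤ 2`, `κ(γ + 1) ≤ 2 + √2` and `q ≥ 0`. -/

lemma quartic_eq_sum_sq (γ κ a b : ℝ) :
    1 + 2*(a^2 + b^2 + a^2*b^2) - κ*(a^2 + b^2 + 2*γ*a*b) =
      (2 - κ)*(a - b)^2 + (Real.sqrt 2*(a*b) - 1)^2 + 2*(a*b)*(2 + Real.sqrt 2 - κ*(γ + 1)) := by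
  linear_combination -(a*b)^2 * Real.sq_sqrt (zero_le_two : (0:ℝ) ≤ 2)

lemma quartic_nonneg {γ κ a b : ℝ} (hκ : κ ≤ 2) (hκγ : κ*(γ + 1) ≤ 2 + Real.sqrt 2)
    (hab : 0 ≤ a*b) :
    0 ≤ 1 + 2*(a^2 + b^2 + a^2*b^2) - κ*(a^2 + b^2 + 2*γ*a*b) := by
  rw [quartic_eq_sum_sq]
  have h₁ : 0 ≤ (2 - κ)*(a - b)^2 := mul_nonneg (by linarith) (sq_nonneg _)
  have h₂ : 0 ≤ 2*(a*b)*(2 + Real.sqrt 2 - κ*(γ + 1)) := mul_nonneg (by positivity) (by linarith)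
  linarith [sq_nonneg (Real.sqrt 2*(a*b) - 1)]

theorem stmt7_general (γ κ : ℝ) (hγ : γ ∈ Set.Icc (0:ℝ) 1)
    (hκ2 : κ ≤ min 2 ((2 + Real.sqrt 2)/(γ+1)))
    (y₁ y₂ : ℝ) (h1 : 0 ≤ y₁) (h2 : 0 ≤ y₂) :
    0 ≤ 1 + 2*(y₁^2 + y₂^2 + y₁^2*y₂^2) - κ*(y₁^2 + y₂^2 + 2*γ*y₁*y₂) := by
  have hγ₁ : 0 < γ + 1 := by linarith [hγ.1]
  obtain ⟨hκ, hκγ⟩ := le_min_iff.mp hκ2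
  exact quartic_nonneg hκ ((le_div_iff₀ hγ₁).mp hκγ) (mul_nonneg h1 h2)

theorem stmt7 (γ κ : ℝ) (hγ : γ ∈ Set.Icc (0:ℝ) 1)
    (hκ1 : (2 - Real.sqrt 2)/(γ+1) ≤ κ)
    (hκ2 : κ ≤ min 2 ((2 + Real.sqrt 2)/(γ+1)))
    (y₁ y₂ : ℝ) (h1 : 0 ≤ y₁) (h2 : 0 ≤ y₂) :
    0 ≤ 1 + 2*(y₁^2 + y₂^2 + y₁^2*y₂^2) - κ*(y₁^2 + y₂^2 + 2*γ*y₁*y₂) :=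
  stmt7_general γ κ hγ hκ2 y₁ y₂ h1 h2
end

section
/- Let γ ∈ [0,1] and let κ be a real number with 0 < κ ≤ min{2, (2+√3)/(2γ+1)}. Then for all y₁, y₂, y₃ ≥ 0: 1 + (2 − κ)(y₁² + y₂² + y₃²) + 2(y₁²y₂² + y₁²y₃² + y₂²y₃²) + 2y₁²y₂²y₃² − 2κγ(y₁y₂ + y₁y₃ + y₂y₃) ≥ 0. -/
/-! With `u = y₁y₂, v = y₁y₃, w = y₂y₃` the expression contains `1 + 2(u² + v² + w²) + 2uvw`,
which dominates `√3 (u + v + w)`. Since `y₁² + y₂² + y₃² ≥ u + v + w` and `κ ≤ 2`, the remaining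
terms are at least `-(κ(2γ + 1) - 2)(u + v + w) ≥ -√3 (u + v + w)`. -/

lemma neg_mul_sum_sq_le_two_mul_mul_of_mul_nonneg {t a b c : ℝ} (ht : 0 ≤ t) (ha : -t ≤ a)
    (hbc : 0 ≤ b * c) : -t * (a ^ 2 + b ^ 2 + c ^ 2) ≤ 2 * (a * b * c) := by
  nlinarith [mul_nonneg hbc (neg_le_iff_add_nonneg.mp ha), mul_nonneg ht (sq_nonneg (b - c)),
    mul_nonneg ht (sq_nonneg a)]

lemma neg_mul_sum_sq_le_two_mul_mul {t a b c : ℝ} (ht : 0 ≤ t) (ha : -t ≤ a) (hb : -t ≤ b)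
    (hc : -t ≤ c) : -t * (a ^ 2 + b ^ 2 + c ^ 2) ≤ 2 * (a * b * c) := by
  -- Two of `a, b, c` have the same sign.
  rcases le_or_gt 0 (b * c) with hbc | hbc
  · exact neg_mul_sum_sq_le_two_mul_mul_of_mul_nonneg ht ha hbc
  rcases le_or_gt 0 (a * c) with hac | hac
  · linarith [neg_mul_sum_sq_le_two_mul_mul_of_mul_nonneg ht hb hac]
  · have hab : 0 ≤ a * b := by nlinarith [mul_pos_of_neg_of_neg hbc hac, sq_nonneg c]
    linarith [neg_mul_sum_sq_le_two_mul_mul_of_mul_nonneg ht hc hab]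

lemma sqrt_three_mul_add_le {u v w : ℝ} (hu : 0 ≤ u) (hv : 0 ≤ v) (hw : 0 ≤ w) :
    √3 * (u + v + w) ≤ 1 + 2 * (u ^ 2 + v ^ 2 + w ^ 2) + 2 * (u * v * w) := by
  have hr : √3 ^ 2 = 3 := Real.sq_sqrt (by norm_num)
  have hr1 : 1 ≤ √3 := by nlinarith [Real.sqrt_nonneg 3]
  have hr3 : √3 ≤ 3 := by nlinarith
  -- Equality holds at `u = v = w = s`.
  obtain ⟨s, hs⟩ : ∃ s : ℝ, s = (√3 - 1) / 2 := ⟨_, rfl⟩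
  have hs0 : 0 ≤ s := by rw [hs]; linarith
  have hcube := neg_mul_sum_sq_le_two_mul_mul hs0 (a := u - s) (b := v - s) (c := w - s)
    (by linarith) (by linarith) (by linarith)
  have hdiff : 1 + 2 * (u ^ 2 + v ^ 2 + w ^ 2) + 2 * (u * v * w) - √3 * (u + v + w) =
      (2 * ((u - s) * (v - s) * (w - s)) + s * ((u - s) ^ 2 + (v - s) ^ 2 + (w - s) ^ 2))
        + (3 - √3) * ((u - s) ^ 2 + (v - s) ^ 2 + (w - s) ^ 2)
        + s * ((u - s) + (v - s) + (w - s)) ^ 2 := by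
    subst hs
    linear_combination ((u + v + w - √3) / 2) * hr
  have hquad : 0 ≤ (3 - √3) * ((u - s) ^ 2 + (v - s) ^ 2 + (w - s) ^ 2) := by
    apply mul_nonneg <;> [linarith; positivity]
  linarith [hcube, hquad, mul_nonneg hs0 (sq_nonneg ((u - s) + (v - s) + (w - s)))]

theorem stmt9_general (γ κ : ℝ) (hγ : γ ∈ Set.Icc (0:ℝ) 1)
    (hκ : κ ≤ min 2 ((2 + Real.sqrt 3)/(2*γ+1)))
    (y₁ y₂ y₃ : ℝ) (h1 : 0 ≤ y₁) (h2 : 0 ≤ y₂) (h3 : 0 ≤ y₃) :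
    0 ≤ 1 + (2 - κ)*(y₁^2 + y₂^2 + y₃^2)
        + 2*(y₁^2*y₂^2 + y₁^2*y₃^2 + y₂^2*y₃^2) + 2*y₁^2*y₂^2*y₃^2
        - 2*κ*γ*(y₁*y₂ + y₁*y₃ + y₂*y₃) := by
  obtain ⟨hκ2, hκr⟩ := le_min_iff.mp hκ
  rw [le_div_iff₀ (by linarith [hγ.1])] at hκr
  have hsum : 0 ≤ y₁*y₂ + y₁*y₃ + y₂*y₃ := by positivity
  have hsum_le : y₁*y₂ + y₁*y₃ + y₂*y₃ ≤ y₁^2 + y₂^2 + y₃^2 := by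
    nlinarith [sq_nonneg (y₁-y₂), sq_nonneg (y₁-y₃), sq_nonneg (y₂-y₃)]
  have key := sqrt_three_mul_add_le (mul_nonneg h1 h2) (mul_nonneg h1 h3) (mul_nonneg h2 h3)
  have h2κ : 0 ≤ (2 - κ) * ((y₁^2 + y₂^2 + y₃^2) - (y₁*y₂ + y₁*y₃ + y₂*y₃)) :=
    mul_nonneg (by linarith) (by linarith)
  have hκγ : 0 ≤ (2 + √3 - κ*(2*γ+1)) * (y₁*y₂ + y₁*y₃ + y₂*y₃) :=
    mul_nonneg (by linarith) hsum
  linarith [key, h2κ, hκγ]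

theorem stmt9 (γ κ : ℝ) (hγ : γ ∈ Set.Icc (0:ℝ) 1)
    (hκ0 : 0 < κ) (hκ : κ ≤ min 2 ((2 + Real.sqrt 3)/(2*γ+1)))
    (y₁ y₂ y₃ : ℝ) (h1 : 0 ≤ y₁) (h2 : 0 ≤ y₂) (h3 : 0 ≤ y₃) :
    0 ≤ 1 + (2 - κ)*(y₁^2 + y₂^2 + y₃^2)
        + 2*(y₁^2*y₂^2 + y₁^2*y₃^2 + y₂^2*y₃^2) + 2*y₁^2*y₂^2*y₃^2
        - 2*κ*γ*(y₁*y₂ + y₁*y₃ + y₂*y₃) :=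
  stmt9_general γ κ hγ hκ y₁ y₂ y₃ h1 h2 h3
end

section
/- Let θ ≥ max{1/4, (γ+1)/(4+2√2)} with γ ∈ [0,1]. Then for all reals z₁, z₂ ≤ 0 and z₀ with |z₀| ≤ 2γ√(z₁z₂), one has 2(1−θz₁)(1−θz₂) − 1 + (z₀ + z₁ + z₂)/2 ≥ 0. -/
/-!
Write `t = √(z₁ z₂)`. Since `θ ≥ 1/4`, the coefficient `2θ - 1/2` of `z₁ + z₂` in the expression is
nonnegative, so AM–GM (`z₁ + z₂ ≤ -2t`) together with `z₀ ≥ -2γt` bounds the expression below by the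
quadratic `2θ²t² + (4θ - 1 - γ)t + 1`. A second AM–GM, `2θ²t² + 1 ≥ 2√2 θt`, leaves
`(4θ + 2√2 θ - 1 - γ)t`, which is nonnegative exactly by `θ ≥ (γ + 1)/(4 + 2√2)`.
-/

open Real

lemma add_le_neg_two_mul_sqrt_mul {x y : ℝ} (hx : x ≤ 0) (hy : y ≤ 0) :
    x + y ≤ -(2 * √(x * y)) := by
  have hsq : √(x * y) ^ 2 = x * y := sq_sqrt (mul_nonneg_of_nonpos_of_nonpos hx hy)
  nlinarith [sqrt_nonneg (x * y), sq_nonneg (x - y), sq_nonneg (x + y + 2 * √(x * y))]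

lemma two_sqrt_two_mul_le_two_mul_sq_add_one (s : ℝ) : 2 * √2 * s ≤ 2 * s ^ 2 + 1 := by
  have hs2 : √2 ^ 2 = 2 := sq_sqrt zero_le_two
  nlinarith [sq_nonneg (√2 * s - 1)]

lemma quadratic_nonneg_of_neg_two_sqrt_two_mul_le {θ c t : ℝ} (ht : 0 ≤ t)
    (hc : -(2 * √2 * θ) ≤ c) : 0 ≤ 2 * θ ^ 2 * t ^ 2 + c * t + 1 := by
  have := two_sqrt_two_mul_le_two_mul_sq_add_one (θ * t)
  nlinarith [mul_nonneg (neg_le_iff_add_nonneg.mp hc) ht]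

lemma quadratic_in_sqrt_mul_le {θ γ z₀ z₁ z₂ : ℝ} (hθ : 1 / 4 ≤ θ) (h1 : z₁ ≤ 0) (h2 : z₂ ≤ 0)
    (h0 : -(2 * γ * √(z₁ * z₂)) ≤ z₀) :
    2 * θ ^ 2 * √(z₁ * z₂) ^ 2 + (4 * θ - 1 - γ) * √(z₁ * z₂) + 1
      ≤ 2 * (1 - θ * z₁) * (1 - θ * z₂) - 1 + (z₀ + z₁ + z₂) / 2 := by
  have hsq : √(z₁ * z₂) ^ 2 = z₁ * z₂ := sq_sqrt (mul_nonneg_of_nonpos_of_nonpos h1 h2)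
  have hamgm := add_le_neg_two_mul_sqrt_mul h1 h2
  nlinarith [mul_le_mul_of_nonneg_left hamgm (by linarith : (0 : ℝ) ≤ 2 * θ - 1 / 2)]

theorem stmt14_general (θ γ : ℝ)
    (hθ : θ ≥ max (1/4) ((γ+1)/(4 + 2*Real.sqrt 2)))
    (z₀ z₁ z₂ : ℝ) (h1 : z₁ ≤ 0) (h2 : z₂ ≤ 0)
    (h0 : |z₀| ≤ 2*γ*Real.sqrt (z₁*z₂)) :
    0 ≤ 2*(1 - θ*z₁)*(1 - θ*z₂) - 1 + (z₀ + z₁ + z₂)/2 := by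
  obtain ⟨hθ4, hθγ⟩ := max_le_iff.mp hθ
  have hγθ : γ + 1 ≤ θ * (4 + 2 * √2) := (div_le_iff₀ (by positivity)).mp hθγ
  have hc : -(2 * √2 * θ) ≤ 4 * θ - 1 - γ := by linarith
  calc 0 ≤ 2 * θ ^ 2 * √(z₁ * z₂) ^ 2 + (4 * θ - 1 - γ) * √(z₁ * z₂) + 1 :=
        quadratic_nonneg_of_neg_two_sqrt_two_mul_le (sqrt_nonneg _) hc
    _ ≤ _ := quadratic_in_sqrt_mul_le hθ4 h1 h2 (neg_le_of_abs_le h0)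

theorem stmt14 (θ γ : ℝ) (hγ : γ ∈ Set.Icc (0:ℝ) 1)
    (hθ : θ ≥ max (1/4) ((γ+1)/(4 + 2*Real.sqrt 2)))
    (z₀ z₁ z₂ : ℝ) (h1 : z₁ ≤ 0) (h2 : z₂ ≤ 0)
    (h0 : |z₀| ≤ 2*γ*Real.sqrt (z₁*z₂)) :
    0 ≤ 2*(1 - θ*z₁)*(1 - θ*z₂) - 1 + (z₀ + z₁ + z₂)/2 :=
  stmt14_general θ γ hθ z₀ z₁ z₂ h1 h2 h0
end

section
/- Let θ ≥ max{1/4, (2γ+1)/(4+2√3)} with γ ∈ [0,1]. Then for all reals z₁, z₂, z₃ ≤ 0 and z₀ with |z₀| ≤ 2γ(√(z₁z₂) + √(z₁z₃) + √(z₂z₃)), one has 2(1−θz₁)(1−θz₂)(1−θz₃) − 1 + (z₀ + z₁ + z₂ + z₃)/2 ≥ 0. -/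
/-!
Write `aᵢ = -zᵢ ≥ 0`, `S = √(a₁a₂) + √(a₁a₃) + √(a₂a₃)` and `p, q, r = θ√(a₁a₂), θ√(a₁a₃), θ√(a₂a₃)`.
Expanding the product, `p² = θ²a₁a₂`, ... and `pqr = θ³a₁a₂a₃`, so the expression equals
`1 + 2(p² + q² + r²) + 2pqr + (2θ - 1/2)(a₁ + a₂ + a₃) + z₀/2`.
Using `z₀ ≥ -2γS`, the AM-GM bound `a₁ + a₂ + a₃ ≥ S` (with `2θ - 1/2 ≥ 0`) and
`γ + 1/2 ≤ (2 + √3)θ`, it remains to show `√3 (p + q + r) ≤ 1 + 2(p² + q² + r²) + 2pqr`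
for `p, q, r ≥ 0`. After the shift `p ↦ p - t` with `t = (√3 - 1)/2` this becomes the
nonnegativity of the cubic `2(a² + b² + c²) + 2t(ab + ac + bc) + 2abc` on `[-t, ∞)³`.
-/

open Real

lemma cubic_nonneg_of_mul_nonneg {t a b c : ℝ} (ht₀ : 0 ≤ t) (ht₁ : t ≤ 1) (ha : -t ≤ a)
    (hbc : 0 ≤ b * c) :
    0 ≤ 2 * (a ^ 2 + b ^ 2 + c ^ 2) + 2 * t * (a * b + a * c + b * c) + 2 * (a * b * c) := by
  nlinarith [mul_nonneg hbc (by linarith : (0:ℝ) ≤ t + a), sq_nonneg (2 * a + t * (b + c)),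
    mul_nonneg (mul_nonneg (by linarith : (0:ℝ) ≤ 1 - t) (by linarith : (0:ℝ) ≤ 1 + t))
      (sq_nonneg (b + c)),
    sq_nonneg (b - c), sq_nonneg b, sq_nonneg c]

lemma cubic_nonneg {t a b c : ℝ} (ht₀ : 0 ≤ t) (ht₁ : t ≤ 1)
    (ha : -t ≤ a) (hb : -t ≤ b) (hc : -t ≤ c) :
    0 ≤ 2 * (a ^ 2 + b ^ 2 + c ^ 2) + 2 * t * (a * b + a * c + b * c) + 2 * (a * b * c) := by
  -- Of the three pairwise products at least one is nonnegative.
  rcases le_or_gt 0 (b * c) with hbc | hbc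
  · exact cubic_nonneg_of_mul_nonneg ht₀ ht₁ ha hbc
  rcases le_or_gt 0 (a * c) with hac | hac
  · linarith [cubic_nonneg_of_mul_nonneg ht₀ ht₁ hb hac]
  have hab : 0 ≤ a * b := by nlinarith [mul_pos_of_neg_of_neg hac hbc, sq_nonneg c]
  linarith [cubic_nonneg_of_mul_nonneg ht₀ ht₁ hc hab]

lemma sqrt_three_mul_add_le_s15 {p q r : ℝ} (hp : 0 ≤ p) (hq : 0 ≤ q) (hr : 0 ≤ r) :
    √3 * (p + q + r) ≤ 1 + 2 * (p ^ 2 + q ^ 2 + r ^ 2) + 2 * (p * q * r) := by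
  have hs : √3 ^ 2 = 3 := sq_sqrt (by norm_num)
  have hs₁ : 1 ≤ √3 := by nlinarith [sqrt_nonneg 3]
  set t := (√3 - 1) / 2 with ht
  have hcubic := cubic_nonneg (t := t) (a := p - t) (b := q - t) (c := r - t)
    (by linarith) (by nlinarith) (by linarith) (by linarith) (by linarith)
  have hshift : 1 + 2 * (p ^ 2 + q ^ 2 + r ^ 2) + 2 * (p * q * r) - √3 * (p + q + r)
      = 2 * ((p - t) ^ 2 + (q - t) ^ 2 + (r - t) ^ 2)
        + 2 * t * ((p - t) * (q - t) + (p - t) * (r - t) + (q - t) * (r - t))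
        + 2 * ((p - t) * (q - t) * (r - t)) := by
    rw [ht]; linear_combination ((p + q + r - √3) / 2) * hs
  linarith

lemma sqrt_mul_le_add_div_two {x y : ℝ} (hx : 0 ≤ x) (hy : 0 ≤ y) : √(x * y) ≤ (x + y) / 2 :=
  sqrt_le_iff.mpr ⟨by linarith, by nlinarith [sq_nonneg (x - y)]⟩

lemma sqrt_mul_mul_sqrt_mul_mul_sqrt_mul {x y z : ℝ} (hx : 0 ≤ x) (hy : 0 ≤ y) (hz : 0 ≤ z) :
    √(x * y) * √(x * z) * √(y * z) = x * y * z := by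
  rw [← sqrt_mul (by positivity), ← sqrt_mul (by positivity),
    show x * y * (x * z) * (y * z) = (x * y * z) ^ 2 by ring, sqrt_sq (by positivity)]

lemma stability_polynomial_nonneg {θ γ a₁ a₂ a₃ w : ℝ} (hθ : 1 / 4 ≤ θ)
    (hθγ : 2 * γ + 1 ≤ θ * (4 + 2 * √3)) (ha₁ : 0 ≤ a₁) (ha₂ : 0 ≤ a₂) (ha₃ : 0 ≤ a₃)
    (hw : -(2 * γ * (√(a₁ * a₂) + √(a₁ * a₃) + √(a₂ * a₃))) ≤ w) :
    0 ≤ 2 * (1 + θ * a₁) * (1 + θ * a₂) * (1 + θ * a₃) - 1 + (w - a₁ - a₂ - a₃) / 2 := by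
  have hθ₀ : 0 ≤ θ := by linarith
  have hcubic := sqrt_three_mul_add_le_s15 (mul_nonneg hθ₀ (sqrt_nonneg (a₁ * a₂)))
    (mul_nonneg hθ₀ (sqrt_nonneg (a₁ * a₃))) (mul_nonneg hθ₀ (sqrt_nonneg (a₂ * a₃)))
  have e₁₂ : √(a₁ * a₂) ^ 2 = a₁ * a₂ := sq_sqrt (by positivity)
  have e₁₃ : √(a₁ * a₃) ^ 2 = a₁ * a₃ := sq_sqrt (by positivity)
  have e₂₃ : √(a₂ * a₃) ^ 2 = a₂ * a₃ := sq_sqrt (by positivity)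
  have eprod := sqrt_mul_mul_sqrt_mul_mul_sqrt_mul ha₁ ha₂ ha₃
  have amgm₁₂ := sqrt_mul_le_add_div_two ha₁ ha₂
  have amgm₁₃ := sqrt_mul_le_add_div_two ha₁ ha₃
  have amgm₂₃ := sqrt_mul_le_add_div_two ha₂ ha₃
  have hS : 0 ≤ √(a₁ * a₂) + √(a₁ * a₃) + √(a₂ * a₃) := by positivity
  set s₁₂ := √(a₁ * a₂)
  set s₁₃ := √(a₁ * a₃)
  set s₂₃ := √(a₂ * a₃)
  have hamgm : 0 ≤ (2 * θ - 1 / 2) * (a₁ + a₂ + a₃ - (s₁₂ + s₁₃ + s₂₃)) :=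
    mul_nonneg (by linarith) (by linarith)
  have hslack : 0 ≤ (θ * (4 + 2 * √3) - (2 * γ + 1)) / 2 * (s₁₂ + s₁₃ + s₂₃) :=
    mul_nonneg (by linarith) hS
  have hsplit : 2 * (1 + θ * a₁) * (1 + θ * a₂) * (1 + θ * a₃) - 1 + (w - a₁ - a₂ - a₃) / 2
      = (1 + 2 * ((θ * s₁₂) ^ 2 + (θ * s₁₃) ^ 2 + (θ * s₂₃) ^ 2)
          + 2 * (θ * s₁₂ * (θ * s₁₃) * (θ * s₂₃)) - √3 * (θ * s₁₂ + θ * s₁₃ + θ * s₂₃))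
        + (2 * θ - 1 / 2) * (a₁ + a₂ + a₃ - (s₁₂ + s₁₃ + s₂₃))
        + (θ * (4 + 2 * √3) - (2 * γ + 1)) / 2 * (s₁₂ + s₁₃ + s₂₃)
        + (w + 2 * γ * (s₁₂ + s₁₃ + s₂₃)) / 2 := by
    linear_combination (-2 * θ ^ 2) * (e₁₂ + e₁₃ + e₂₃) - 2 * θ ^ 3 * eprod
  linarith

theorem stmt15_general (θ γ : ℝ)
    (hθ : θ ≥ max (1/4) ((2*γ+1)/(4 + 2*Real.sqrt 3)))
    (z₀ z₁ z₂ z₃ : ℝ) (h1 : z₁ ≤ 0) (h2 : z₂ ≤ 0) (h3 : z₃ ≤ 0)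
    (h0 : |z₀| ≤ 2*γ*(Real.sqrt (z₁*z₂) + Real.sqrt (z₁*z₃) + Real.sqrt (z₂*z₃))) :
    0 ≤ 2*(1 - θ*z₁)*(1 - θ*z₂)*(1 - θ*z₃) - 1 + (z₀ + z₁ + z₂ + z₃)/2 := by
  obtain ⟨hθ₄, hθγ⟩ := max_le_iff.mp hθ
  rw [div_le_iff₀ (by positivity)] at hθγ
  have hw : -(2 * γ * (√(-z₁ * -z₂) + √(-z₁ * -z₃) + √(-z₂ * -z₃))) ≤ z₀ := by
    simp only [neg_mul_neg]
    exact (abs_le.mp h0).1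
  convert stability_polynomial_nonneg hθ₄ (by linarith) (neg_nonneg.mpr h1) (neg_nonneg.mpr h2)
    (neg_nonneg.mpr h3) hw using 1
  ring

theorem stmt15 (θ γ : ℝ) (hγ : γ ∈ Set.Icc (0:ℝ) 1)
    (hθ : θ ≥ max (1/4) ((2*γ+1)/(4 + 2*Real.sqrt 3)))
    (z₀ z₁ z₂ z₃ : ℝ) (h1 : z₁ ≤ 0) (h2 : z₂ ≤ 0) (h3 : z₃ ≤ 0)
    (h0 : |z₀| ≤ 2*γ*(Real.sqrt (z₁*z₂) + Real.sqrt (z₁*z₃) + Real.sqrt (z₂*z₃))) :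
    0 ≤ 2*(1 - θ*z₁)*(1 - θ*z₂)*(1 - θ*z₃) - 1 + (z₀ + z₁ + z₂ + z₃)/2 :=
  stmt15_general θ γ hθ z₀ z₁ z₂ z₃ h1 h2 h3 h0
end

section
/- Let k ≥ 2 be an integer and define h(α) = kα / (2(1+α)^k − 1) for α > 0. Then h attains a maximum on (0,∞), and its maximum value a_k is the unique solution a ∈ (0, 1/2) of the equation 2a(1 + (1−a)/(k−1))^{k−1} = 1. -/
/-!
Write `k = m + 1`. The critical points of `h` are the roots of `2 (1 + α)^m (1 - m α) = 1`,
and such a root exists in `(0, 1/m)` by the intermediate value theorem. At a critical point `α`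
the denominator of `h` equals `2 k α (1 + α)^m`, so `h α = 1 / (2 (1 + α)^m) = 1 - m α`, and
Bernoulli's inequality at `1 + α` (the tangent line of `x ↦ x^k`) gives `h β ≤ h α` for all
`β > 0`. Hence every critical point is a maximiser, and the substitution `a = 1 - m α` turns the
critical equation into `2 a (1 + (1 - a)/m)^m = 1`; uniqueness of `a` follows because all
maximisers share the same value.
-/

noncomputable def hFun (k : ℕ) (α : ℝ) : ℝ := k * α / (2 * (1 + α) ^ k - 1)

/-- The numerator of the derivative of `hFun (m + 1)` vanishes at `α`. -/
def IsCritical (m : ℕ) (α : ℝ) : Prop := 2 * (1 + α) ^ m * (1 - m * α) = 1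

section

variable {m : ℕ} {α : ℝ}

lemma IsCritical.denom_eq (hc : IsCritical m α) :
    2 * (1 + α) ^ (m + 1) - 1 = 2 * (m + 1) * α * (1 + α) ^ m := by
  unfold IsCritical at hc
  linear_combination hc

lemma IsCritical.hFun_eq_inv (hα : 0 < α) (hc : IsCritical m α) :
    hFun (m + 1) α = 1 / (2 * (1 + α) ^ m) := by
  rw [hFun, hc.denom_eq, div_eq_div_iff (by positivity) (by positivity)]
  push_cast
  ring

lemma IsCritical.hFun_eq_one_sub (hα : 0 < α) (hc : IsCritical m α) :
    hFun (m + 1) α = 1 - m * α := by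
  rw [hc.hFun_eq_inv hα, div_eq_iff (by positivity)]
  unfold IsCritical at hc
  linear_combination -hc

lemma IsCritical.hFun_le (hα : 0 < α) (hc : IsCritical m α) {β : ℝ} (hβ : 0 < β) :
    hFun (m + 1) β ≤ hFun (m + 1) α := by
  have tangent :
      (1 + α) ^ (m + 1) + (m + 1 : ℕ) * (1 + α) ^ m * (β - α) ≤ (1 + β) ^ (m + 1) := by
    simpa using
      pow_add_mul_le_add_pow (a := 1 + α) (b := β - α) (by positivity) (by linarith) (m + 1)
  have hβ_pow : 1 ≤ (1 + β) ^ (m + 1) := one_le_pow₀ (by linarith)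
  rw [hc.hFun_eq_inv hα, hFun, div_le_div_iff₀ (by linarith) (by positivity)]
  push_cast at tangent ⊢
  linear_combination 2 * tangent - hc.denom_eq

lemma exists_isCritical (hm : 1 ≤ m) : ∃ α, 0 < α ∧ IsCritical m α := by
  set G : ℝ → ℝ := fun x => 2 * (1 + x) ^ m * (1 - m * x)
  have hm_pos : (0 : ℝ) < m := by exact_mod_cast hm
  have hG_zero : G 0 = 2 := by simp [G]
  have hG_inv : G (m : ℝ)⁻¹ = 0 := by simp [G, hm_pos.ne']
  have hG_cont : ContinuousOn G (Set.Icc 0 (m : ℝ)⁻¹) := by fun_prop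
  obtain ⟨α, hα_mem, hGα⟩ : ∃ α ∈ Set.Icc 0 (m : ℝ)⁻¹, G α = 1 :=
    intermediate_value_Icc' (by positivity) hG_cont
      ⟨by rw [hG_inv]; norm_num, by rw [hG_zero]; norm_num⟩
  refine ⟨α, hα_mem.1.lt_of_ne ?_, hGα⟩
  rintro rfl
  norm_num [hG_zero] at hGα

lemma isCritical_iff (hm : (m : ℝ) ≠ 0) (a : ℝ) :
    IsCritical m ((1 - a) / m) ↔ 2 * a * (1 + (1 - a) / m) ^ m = 1 := by
  rw [IsCritical, mul_div_cancel₀ _ hm, sub_sub_cancel, mul_right_comm]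

end

theorem stmt16 (k : ℕ) (hk : 2 ≤ k) :
    ∃ α : ℝ, 0 < α ∧
      (∀ β : ℝ, 0 < β →
        (k:ℝ)*β/(2*(1+β)^k - 1) ≤ (k:ℝ)*α/(2*(1+α)^k - 1)) ∧
      (k:ℝ)*α/(2*(1+α)^k - 1) ∈ Set.Ioo (0:ℝ) (1/2) ∧
      2*((k:ℝ)*α/(2*(1+α)^k - 1))
        * (1 + (1 - (k:ℝ)*α/(2*(1+α)^k - 1))/((k:ℝ)-1))^(k-1) = 1 ∧
      ∀ a : ℝ, a ∈ Set.Ioo (0:ℝ) (1/2) →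
        2*a*(1 + (1-a)/((k:ℝ)-1))^(k-1) = 1 →
        a = (k:ℝ)*α/(2*(1+α)^k - 1) := by
  obtain ⟨m, rfl⟩ : ∃ m, k = m + 1 := ⟨k - 1, by omega⟩
  have hm_pos : (0 : ℝ) < m := by exact_mod_cast (by omega : 0 < m)
  have hm := hm_pos.ne'
  obtain ⟨α, hα, hc⟩ := exists_isCritical (m := m) (by omega)
  have h_sub : ((m + 1 : ℕ) : ℝ) - 1 = m := by push_cast; ring
  refine ⟨α, hα, fun β hβ => hc.hFun_le hα hβ, ?_, ?_, ?_⟩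
  · have h_pow : 1 < (1 + α) ^ m := one_lt_pow₀ (by linarith) (by omega)
    change hFun (m + 1) α ∈ _
    rw [hc.hFun_eq_inv hα]
    constructor <;> [positivity; exact one_div_lt_one_div_of_lt two_pos (by linarith)]
  · change 2 * hFun (m + 1) α * (1 + (1 - hFun (m + 1) α) / _) ^ _ = 1
    have h_root : (1 - hFun (m + 1) α) / m = α := by
      rw [hc.hFun_eq_one_sub hα, sub_sub_cancel, mul_div_cancel_left₀ _ hm]
    rwa [Nat.add_sub_cancel, h_sub, ← isCritical_iff hm, h_root]
  · rintro a ⟨-, ha⟩ h_eq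
    rw [Nat.add_sub_cancel, h_sub, ← isCritical_iff hm] at h_eq
    have hβ : 0 < (1 - a) / m := div_pos (by linarith) hm_pos
    calc a = hFun (m + 1) ((1 - a) / m) := by
          rw [h_eq.hFun_eq_one_sub hβ, mul_div_cancel₀ _ hm, sub_sub_cancel]
      _ = hFun (m + 1) α := le_antisymm (hc.hFun_le hα hβ) (h_eq.hFun_le hβ hα)
end
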